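/- (Margin of the augmented separator in the general mistake-bound proof.) Let (w, θ) ∈ ℝ^d × ℝ^{K−1} with ‖w‖² + ‖θ‖² = 1, let γ > 0, Δ > 0, and for each t ∈ [T] and i ∈ Ī^t set d_i^t = max(0, γ − z_i^t(w·x^t − θ_i)); let D² = Σ_{t=1}^T Σ_{i∈Ī^t} (d_i^t)² and Z = √(1 + D²/Δ²). Define, for t ∈ [T] and i ∈ Ī^t, the vector x̃_i^t ∈ ℝ^{d+(T+1)(K−1)} whose first d coordinates equal x^t, whose (d+i)-th coordinate equals −1, whose (d+(K−1)t+i)-th coordinate equals Δ, and all other coordinates 0; and define ṽ ∈ ℝ^{d+(T+1)(K−1)} whose first d coordinates are w/Z, next K−1 coordinates are θ/Z, and whose (d+(K−1)t+i)-th coordinate equals z_i^t d_i^t/(ΔZ) for i ∈ Ī^t (all remaining coordinates 0). Then ‖ṽ‖₂ = 1, ‖x̃_i^t‖² = ‖x^t‖² + 1 + Δ² for all t ∈ [T] and i ∈ Ī^t, and z_i^t (ṽ · x̃_i^t) ≥ γ/Z for all t ∈ [T] and i ∈ Ī^t. -/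

import Mathlib

/-!
The separator `ṽ` is `(w, θ, (z_i^t d_i^t / Δ)_{t,i}) / Z`, so its squared norm is
`(‖w‖² + ‖θ‖² + D² / Δ²) / Z² = 1` by the choice of `Z`. The example `x̃_i^t` is `x^t` followed by
`-1` in the threshold slot `i` and `Δ` in the slack slot `(t, i)`, so
`ṽ · x̃_i^t = (w · x^t - θ_i + z_i^t d_i^t) / Z`. Multiplying by `z_i^t = ±1` gives
`(z_i^t (w · x^t - θ_i) + d_i^t) / Z`, which is at least `γ / Z` because the hinge slack satisfies
`d_i^t ≥ γ - z_i^t (w · x^t - θ_i)`.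
-/

open Finset

noncomputable def dotp {d : ℕ} (w x : Fin d → ℝ) : ℝ := ∑ i, w i * x i

noncomputable def zval (yl : ℕ) (i : ℕ) : ℝ := if i < yl then 1 else -1

def Ibar (K yl yr : ℕ) : Finset ℕ := Finset.Icc 1 (yl - 1) ∪ Finset.Icc yr (K - 1)

noncomputable def tau {d : ℕ} (K yl yr : ℕ) (x w : Fin d → ℝ) (θ : ℕ → ℝ) (i : ℕ) : ℝ :=
  if i ∈ Ibar K yl yr ∧ zval yl i * (dotp w x - θ i) ≤ 0 then zval yl i else 0

noncomputable def LMAE (K : ℕ) (f : ℝ) (θ : ℕ → ℝ) (yl yr : ℕ) : ℝ :=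
  (∑ i ∈ Finset.Icc 1 (yl - 1), if f < θ i then (1:ℝ) else 0) +
  (∑ i ∈ Finset.Icc yr (K - 1), if θ i ≤ f then (1:ℝ) else 0)

noncomputable def LIMC (K : ℕ) (f : ℝ) (yl yr : ℕ) (θ : ℕ → ℝ) : ℝ :=
  (∑ i ∈ Finset.Icc 1 (yl - 1), max 0 (θ i - f)) +
  (∑ i ∈ Finset.Icc yr (K - 1), max 0 (f - θ i))

noncomputable def mcount {d : ℕ} (K yl yr : ℕ) (x w : Fin d → ℝ) (θ : ℕ → ℝ) : ℕ :=
  ((Ibar K yl yr).filter (fun i => zval yl i * (dotp w x - θ i) ≤ 0)).card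

section BlockSums

variable {M : Type*} [AddCommMonoid M]

theorem sum_range_add_eq_add_sum_Icc (f : ℕ → M) (m n : ℕ) :
    ∑ j ∈ range (m + n), f j = ∑ j ∈ range m, f j + ∑ i ∈ Icc 1 n, f (m + i - 1) := by
  induction n with
  | zero => simp
  | succ n ih =>
    rw [← add_assoc, sum_range_succ, ih, sum_Icc_succ_top (by omega), add_assoc]
    rfl

theorem sum_range_add_succ_mul (f : ℕ → M) (d n T : ℕ) :
    ∑ j ∈ range (d + (T + 1) * n), f j =
      ∑ j ∈ range d, f j + ∑ i ∈ Icc 1 n, f (d + i - 1) +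
        ∑ t ∈ Icc 1 T, ∑ i ∈ Icc 1 n, f (d + n * t + i - 1) := by
  induction T with
  | zero => simp [sum_range_add_eq_add_sum_Icc]
  | succ T ih =>
    rw [show d + (T + 1 + 1) * n = d + (T + 1) * n + n by ring, sum_range_add_eq_add_sum_Icc, ih,
      sum_Icc_succ_top (by omega), add_assoc _ (∑ t ∈ Icc 1 T, _), mul_comm (T + 1) n]

end BlockSums

theorem zval_sq (yl i : ℕ) : zval yl i ^ 2 = 1 := by
  unfold zval; split <;> norm_num

theorem Ibar_subset_Icc {K yl yr : ℕ} (hyl : yl ≤ K) (hyr : 1 ≤ yr) :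
    Ibar K yl yr ⊆ Icc 1 (K - 1) := by
  intro i hi
  simp only [Ibar, mem_union, mem_Icc] at hi ⊢
  omega

/- The paper's `x̃_i^t` and `ṽ` with 0-based coordinates: its coordinate `d + (K - 1) t + i` is
`j = d + (K - 1) * t + i - 1`. -/
def augExample (d K : ℕ) (Δ : ℝ) (x : Fin d → ℝ) (t i j : ℕ) : ℝ :=
  if h : j < d then x ⟨j, h⟩
  else if j = d + i - 1 then -1
  else if j = d + (K - 1) * t + i - 1 then Δ
  else 0

noncomputable def augSeparator (d K T : ℕ) (yl yr : ℕ → ℕ) (w : Fin d → ℝ) (θ : ℕ → ℝ)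
    (δ : ℕ → ℕ → ℝ) (Δ Z : ℝ) (j : ℕ) : ℝ :=
  if h : j < d then w ⟨j, h⟩ / Z
  else if j < d + (K - 1) then θ (j - d + 1) / Z
  else if (j - d) / (K - 1) ∈ Icc 1 T ∧
      ((j - d) % (K - 1) + 1) ∈ Ibar K (yl ((j - d) / (K - 1))) (yr ((j - d) / (K - 1)))
    then zval (yl ((j - d) / (K - 1))) ((j - d) % (K - 1) + 1)
      * δ ((j - d) / (K - 1)) ((j - d) % (K - 1) + 1) / (Δ * Z)
    else 0

section AugmentedExample

variable {d K T t i : ℕ} {Δ : ℝ} {x : Fin d → ℝ}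

theorem augExample_of_lt (j : Fin d) : augExample d K Δ x t i j = x j := by
  simp [augExample]

theorem augExample_threshold (hi : 1 ≤ i) : augExample d K Δ x t i (d + i - 1) = -1 := by
  rw [augExample, dif_neg (by omega), if_pos rfl]

theorem augExample_slack (ht : 1 ≤ t) (hi : i ∈ Icc 1 (K - 1)) :
    augExample d K Δ x t i (d + (K - 1) * t + i - 1) = Δ := by
  rw [mem_Icc] at hi
  have : K - 1 ≤ (K - 1) * t := Nat.le_mul_of_pos_right _ ht
  rw [augExample, dif_neg (by omega), if_neg (by omega), if_pos rfl]

theorem sum_mul_augExample (v : ℕ → ℝ) (ht : t ∈ Icc 1 T) (hi : i ∈ Icc 1 (K - 1)) :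
    ∑ j ∈ range (d + (T + 1) * (K - 1)), v j * augExample d K Δ x t i j =
      ∑ k : Fin d, v k * x k - v (d + i - 1) + Δ * v (d + (K - 1) * t + i - 1) := by
  rw [mem_Icc] at ht hi
  have hKt : K - 1 ≤ (K - 1) * t := Nat.le_mul_of_pos_right _ ht.1
  have htT : (K - 1) * t ≤ (K - 1) * T := Nat.mul_le_mul_left _ ht.2
  have hlen : (T + 1) * (K - 1) = (K - 1) * T + (K - 1) := by ring
  rw [sum_range_add, sum_range, sum_eq_add_of_mem (i - 1) ((K - 1) * t + i - 1)
    (mem_range.2 (by omega)) (mem_range.2 (by omega)) (by omega)]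
  · rw [show d + (i - 1) = d + i - 1 by omega,
      show d + ((K - 1) * t + i - 1) = d + (K - 1) * t + i - 1 by omega,
      augExample_threshold hi.1, augExample_slack ht.1 (mem_Icc.2 hi)]
    simp only [augExample_of_lt]
    ring
  · intro m _ hm
    rw [augExample, dif_neg (by omega), if_neg (by omega), if_neg (by omega), mul_zero]

theorem sum_augExample_sq (ht : t ∈ Icc 1 T) (hi : i ∈ Icc 1 (K - 1)) :
    ∑ j ∈ range (d + (T + 1) * (K - 1)), augExample d K Δ x t i j ^ 2 =
      ∑ k, x k ^ 2 + 1 + Δ ^ 2 := by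
  simp only [sq]
  rw [sum_mul_augExample _ ht hi, augExample_threshold (mem_Icc.1 hi).1,
    augExample_slack (mem_Icc.1 ht).1 hi]
  simp only [augExample_of_lt]
  ring

end AugmentedExample

section AugmentedSeparator

variable {d K T t i : ℕ} {yl yr : ℕ → ℕ} {w : Fin d → ℝ} {θ : ℕ → ℝ} {δ : ℕ → ℕ → ℝ}
  {Δ Z : ℝ}

theorem augSeparator_of_lt (j : Fin d) : augSeparator d K T yl yr w θ δ Δ Z j = w j / Z := by
  simp [augSeparator]

theorem augSeparator_threshold (hi : i ∈ Icc 1 (K - 1)) :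
    augSeparator d K T yl yr w θ δ Δ Z (d + i - 1) = θ i / Z := by
  rw [mem_Icc] at hi
  rw [augSeparator, dif_neg (by omega), if_pos (by omega), show d + i - 1 - d + 1 = i by omega]

theorem augSeparator_slack (ht : t ∈ Icc 1 T) (hi : i ∈ Icc 1 (K - 1)) :
    augSeparator d K T yl yr w θ δ Δ Z (d + (K - 1) * t + i - 1) =
      if i ∈ Ibar K (yl t) (yr t) then zval (yl t) i * δ t i / (Δ * Z) else 0 := by
  rw [mem_Icc] at hi
  have hKt : K - 1 ≤ (K - 1) * t := Nat.le_mul_of_pos_right _ (mem_Icc.1 ht).1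
  have hoff : d + (K - 1) * t + i - 1 - d = (K - 1) * t + (i - 1) := by omega
  have hdiv : ((K - 1) * t + (i - 1)) / (K - 1) = t := by
    rw [Nat.mul_add_div (by omega), Nat.div_eq_of_lt (by omega), add_zero]
  have hmod : ((K - 1) * t + (i - 1)) % (K - 1) + 1 = i := by
    rw [Nat.mul_add_mod, Nat.mod_eq_of_lt (by omega)]; omega
  rw [augSeparator, dif_neg (by omega), if_neg (by omega), hoff, hdiv, hmod]
  simp only [ht, true_and]

theorem sum_augSeparator_sq (hsub : ∀ t ∈ Icc 1 T, Ibar K (yl t) (yr t) ⊆ Icc 1 (K - 1)) :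
    ∑ j ∈ range (d + (T + 1) * (K - 1)), augSeparator d K T yl yr w θ δ Δ Z j ^ 2 =
      (∑ k, w k ^ 2 + ∑ i ∈ Icc 1 (K - 1), θ i ^ 2 +
        (∑ t ∈ Icc 1 T, ∑ i ∈ Ibar K (yl t) (yr t), δ t i ^ 2) / Δ ^ 2) / Z ^ 2 := by
  have hblock : ∀ t ∈ Icc 1 T,
      ∑ i ∈ Icc 1 (K - 1), augSeparator d K T yl yr w θ δ Δ Z (d + (K - 1) * t + i - 1) ^ 2 =
        ∑ i ∈ Ibar K (yl t) (yr t), δ t i ^ 2 / (Δ ^ 2 * Z ^ 2) := by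
    intro t ht
    rw [sum_congr rfl fun i hi => by rw [augSeparator_slack ht hi, ite_pow, zero_pow two_ne_zero],
      sum_ite_mem, inter_eq_right.2 (hsub t ht)]
    refine sum_congr rfl fun i _ => ?_
    rw [div_pow, mul_pow, zval_sq, one_mul, mul_pow]
  have hthreshold : ∑ i ∈ Icc 1 (K - 1), augSeparator d K T yl yr w θ δ Δ Z (d + i - 1) ^ 2 =
      ∑ i ∈ Icc 1 (K - 1), θ i ^ 2 / Z ^ 2 :=
    sum_congr rfl fun i hi => by rw [augSeparator_threshold hi, div_pow]
  rw [sum_range_add_succ_mul, sum_range, hthreshold, sum_congr rfl hblock]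
  simp only [augSeparator_of_lt, div_pow, ← sum_div]
  ring

theorem sum_augSeparator_mul_augExample (x : Fin d → ℝ) (hΔ : Δ ≠ 0) (ht : t ∈ Icc 1 T)
    (hi : i ∈ Ibar K (yl t) (yr t)) (hsub : Ibar K (yl t) (yr t) ⊆ Icc 1 (K - 1)) :
    ∑ j ∈ range (d + (T + 1) * (K - 1)),
        augSeparator d K T yl yr w θ δ Δ Z j * augExample d K Δ x t i j =
      (dotp w x - θ i + zval (yl t) i * δ t i) / Z := by
  rw [sum_mul_augExample _ ht (hsub hi), augSeparator_threshold (hsub hi),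
    augSeparator_slack ht (hsub hi), if_pos hi]
  simp only [augSeparator_of_lt, div_mul_eq_mul_div, ← sum_div, dotp]
  field_simp

end AugmentedSeparator

theorem augmented_separator_margin_general
    {d K T : ℕ}
    (x : ℕ → Fin d → ℝ) (yl yr : ℕ → ℕ)
    (hy : ∀ t ∈ Finset.Icc 1 T, 1 ≤ yl t ∧ yl t ≤ yr t ∧ yr t ≤ K)
    (wv : Fin d → ℝ) (θv : ℕ → ℝ)
    (hnorm : (∑ i, wv i ^ 2) + (∑ i ∈ Finset.Icc 1 (K-1), θv i ^ 2) = 1)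
    (γ Δ : ℝ) (hΔ : 0 < Δ)
    (dv : ℕ → ℕ → ℝ)
    (hdv : ∀ t i, dv t i = max 0 (γ - zval (yl t) i * (dotp wv (x t) - θv i)))
    (D : ℝ)
    (hD2 : D ^ 2 = ∑ t ∈ Finset.Icc 1 T, ∑ i ∈ Ibar K (yl t) (yr t), (dv t i) ^ 2)
    (Z : ℝ) (hZ : Z = Real.sqrt (1 + D ^ 2 / Δ ^ 2))
    (xt : ℕ → ℕ → ℕ → ℝ)
    (hxt : ∀ t i j, xt t i j =
      if h : j < d then x t ⟨j, h⟩
      else if j = d + i - 1 then -1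
      else if j = d + (K-1) * t + i - 1 then Δ
      else 0)
    (vt : ℕ → ℝ)
    (hvt : ∀ j, vt j =
      if h : j < d then wv ⟨j, h⟩ / Z
      else if j < d + (K-1) then θv (j - d + 1) / Z
      else if (j - d) / (K-1) ∈ Finset.Icc 1 T ∧
              ((j - d) % (K-1) + 1) ∈ Ibar K (yl ((j - d) / (K-1))) (yr ((j - d) / (K-1)))
        then zval (yl ((j - d) / (K-1))) ((j - d) % (K-1) + 1)
              * dv ((j - d) / (K-1)) ((j - d) % (K-1) + 1) / (Δ * Z)
        else 0) :
    (∑ j ∈ Finset.range (d + (T+1) * (K-1)), (vt j) ^ 2 = 1) ∧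
    (∀ t ∈ Finset.Icc 1 T, ∀ i ∈ Ibar K (yl t) (yr t),
      ∑ j ∈ Finset.range (d + (T+1) * (K-1)), (xt t i j) ^ 2
        = (∑ k, (x t k) ^ 2) + 1 + Δ ^ 2) ∧
    (∀ t ∈ Finset.Icc 1 T, ∀ i ∈ Ibar K (yl t) (yr t),
      γ / Z ≤ zval (yl t) i * ∑ j ∈ Finset.range (d + (T+1) * (K-1)), vt j * xt t i j) := by
  obtain rfl : xt = fun t i => augExample d K Δ (x t) t i := funext₃ hxt
  obtain rfl : vt = augSeparator d K T yl yr wv θv dv Δ Z := funext hvt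
  have hsub : ∀ t ∈ Icc 1 T, Ibar K (yl t) (yr t) ⊆ Icc 1 (K - 1) := by
    intro t ht
    obtain ⟨hyl, hlr, hrK⟩ := hy t ht
    exact Ibar_subset_Icc (hlr.trans hrK) (hyl.trans hlr)
  have hZ2 : Z ^ 2 = 1 + D ^ 2 / Δ ^ 2 := by rw [hZ, Real.sq_sqrt (by positivity)]
  have hZpos : 0 < Z := by rw [hZ]; positivity
  refine ⟨?_, fun t ht i hi => sum_augExample_sq ht (hsub t ht hi), fun t ht i hi => ?_⟩
  · rw [sum_augSeparator_sq hsub, hnorm, ← hD2, ← hZ2, div_self (by positivity)]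
  · rw [sum_augSeparator_mul_augExample _ hΔ.ne' ht hi (hsub t ht), mul_div_assoc', mul_add,
      ← mul_assoc, ← sq, zval_sq, one_mul]
    have hslack : γ - zval (yl t) i * (dotp wv (x t) - θv i) ≤ dv t i :=
      hdv t i ▸ le_max_right _ _
    gcongr
    linarith

/-- Margin of the augmented separator in the general mistake-bound proof.
Coordinates of `ℝ^{d+(T+1)(K-1)}` are indexed (0-based) by `j ∈ range (d+(T+1)*(K-1))`:
the 1-based coordinate `d+i` is `j = d+i-1`, and the 1-based coordinate
`d+(K-1)t+i` is `j = d+(K-1)*t+i-1`, which is decoded by `t = (j-d)/(K-1)`,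
`i = (j-d) % (K-1) + 1`. -/
theorem augmented_separator_margin
    {d K T : ℕ} (hd : 1 ≤ d) (hK : 2 ≤ K) (hT : 1 ≤ T)
    (x : ℕ → Fin d → ℝ) (yl yr : ℕ → ℕ)
    (hy : ∀ t ∈ Finset.Icc 1 T, 1 ≤ yl t ∧ yl t ≤ yr t ∧ yr t ≤ K)
    (wv : Fin d → ℝ) (θv : ℕ → ℝ)
    (hnorm : (∑ i, wv i ^ 2) + (∑ i ∈ Finset.Icc 1 (K-1), θv i ^ 2) = 1)
    (γ Δ : ℝ) (hγ : 0 < γ) (hΔ : 0 < Δ)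
    (dv : ℕ → ℕ → ℝ)
    (hdv : ∀ t i, dv t i = max 0 (γ - zval (yl t) i * (dotp wv (x t) - θv i)))
    (D : ℝ) (hD : 0 ≤ D)
    (hD2 : D ^ 2 = ∑ t ∈ Finset.Icc 1 T, ∑ i ∈ Ibar K (yl t) (yr t), (dv t i) ^ 2)
    (Z : ℝ) (hZ : Z = Real.sqrt (1 + D ^ 2 / Δ ^ 2))
    (xt : ℕ → ℕ → ℕ → ℝ)
    (hxt : ∀ t i j, xt t i j =
      if h : j < d then x t ⟨j, h⟩
      else if j = d + i - 1 then -1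
      else if j = d + (K-1) * t + i - 1 then Δ
      else 0)
    (vt : ℕ → ℝ)
    (hvt : ∀ j, vt j =
      if h : j < d then wv ⟨j, h⟩ / Z
      else if j < d + (K-1) then θv (j - d + 1) / Z
      else if (j - d) / (K-1) ∈ Finset.Icc 1 T ∧
              ((j - d) % (K-1) + 1) ∈ Ibar K (yl ((j - d) / (K-1))) (yr ((j - d) / (K-1)))
        then zval (yl ((j - d) / (K-1))) ((j - d) % (K-1) + 1)
              * dv ((j - d) / (K-1)) ((j - d) % (K-1) + 1) / (Δ * Z)
        else 0) :
    (∑ j ∈ Finset.range (d + (T+1) * (K-1)), (vt j) ^ 2 = 1) ∧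
    (∀ t ∈ Finset.Icc 1 T, ∀ i ∈ Ibar K (yl t) (yr t),
      ∑ j ∈ Finset.range (d + (T+1) * (K-1)), (xt t i j) ^ 2
        = (∑ k, (x t k) ^ 2) + 1 + Δ ^ 2) ∧
    (∀ t ∈ Finset.Icc 1 T, ∀ i ∈ Ibar K (yl t) (yr t),
      γ / Z ≤ zval (yl t) i * ∑ j ∈ Finset.range (d + (T+1) * (K-1)), vt j * xt t i j) :=
  augmented_separator_margin_general x yl yr hy wv θv hnorm γ Δ hΔ dv hdv D hD2 Z hZ xt hxt vt hvt
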